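/- Let K be a field, E an n-dimensional K-vector space, and r ∈ ℕ with 1 ≤ r < n. Set d = n² − r² and assume d² + n²d ≤ n⁴. Then there exist subspaces L and M of E⊗E with dim L = dim M = d such that (L ⊗ L) ∩ (E ⊗ M ⊗ E) = {0} in E^{⊗4}. -/

import Mathlib

open TensorProduct

namespace GS

variable (K : Type*) [Field K] (V : Type*) [AddCommGroup V] [Module K V]

/-- The tensor product of two subspaces, as a subspace of the tensor product. -/
noncomputable def tsub {M N : Type*} [AddCommGroup M] [Module K M] [AddCommGroup N] [Module K N]
    (A : Submodule K M) (B : Submodule K N) : Submodule K (M ⊗[K] N) :=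
  LinearMap.range (TensorProduct.map A.subtype B.subtype)

/-- `V ≃ V^{⊗1}`. -/
noncomputable def pow1 : V ≃ₗ[K] ⨂[K]^1 V :=
  (PiTensorProduct.subsingletonEquiv (s := fun _ => V) (0 : Fin 1)).symm

/-- `V ⊗ V ≃ V^{⊗2}`. -/
noncomputable def pow2 : (V ⊗[K] V) ≃ₗ[K] ⨂[K]^2 V :=
  (TensorProduct.congr (pow1 K V) (pow1 K V)).trans
    ((TensorPower.mulEquiv (n := 1) (m := 1)).trans (TensorPower.cast K V (by norm_num)))

/-- The subspace `V^{⊗a} ⊗ L ⊗ V^{⊗b}` of `V^{⊗(a+(2+b))}`. -/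
noncomputable def segAux (a b : ℕ) (L : Submodule K (V ⊗[K] V)) :
    Submodule K (⨂[K]^(a + (2 + b)) V) :=
  Submodule.map (TensorPower.mulEquiv (R := K) (M := V) (n := a) (m := 2 + b)).toLinearMap
    (tsub K (⊤ : Submodule K (⨂[K]^a V))
      (Submodule.map (TensorPower.mulEquiv (R := K) (M := V) (n := 2) (m := b)).toLinearMap
        (tsub K (L.map (pow2 K V : (V ⊗[K] V) →ₗ[K] ⨂[K]^2 V)) (⊤ : Submodule K (⨂[K]^b V)))))

/-- For `j : Fin (q-1)`, the subspace `V^{⊗j} ⊗ L ⊗ V^{⊗(q-2-j)}` of `V^{⊗q}`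
(the `(j+1)`-st shift of `L`). -/
noncomputable def shiftSub (q : ℕ) (L : Submodule K (V ⊗[K] V)) (j : Fin (q - 1)) :
    Submodule K (⨂[K]^q V) :=
  Submodule.map (TensorPower.cast K V (by have := j.2; omega : (j : ℕ) + (2 + (q - 2 - j)) = q)).toLinearMap
    (segAux K V j (q - 2 - j) L)

/-- `E_q(L,V) = ⋂_{j=1}^{q-1} V^{⊗(j-1)} ⊗ L ⊗ V^{⊗(q-1-j)} ⊆ V^{⊗q}`. -/
noncomputable def Eint (q : ℕ) (L : Submodule K (V ⊗[K] V)) : Submodule K (⨂[K]^q V) :=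
  ⨅ j : Fin (q - 1), shiftSub K V q L j

/-- The degree-`q` component of the two-sided ideal generated by the subspace
`M ⊆ V ⊗ V` of quadratic relations: the sum of all shifts `V^{⊗(j-1)} ⊗ M ⊗ V^{⊗(q-1-j)}`. -/
noncomputable def idealComp (q : ℕ) (M : Submodule K (V ⊗[K] V)) : Submodule K (⨂[K]^q V) :=
  ⨆ j : Fin (q - 1), shiftSub K V q M j

/-- The dimension of the degree-`q` component of the quadratic algebra with space of
relations `M ⊆ V ⊗ V` (the quotient of `V^{⊗q}` by the degree-`q` component of the ideal). -/
noncomputable def quadDim (q : ℕ) (M : Submodule K (V ⊗[K] V)) : ℕ :=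
  Module.finrank K ((⨂[K]^q V) ⧸ idealComp K V q M)

/-- `h_q(K,n,d)`: the minimal dimension of the `q`-th graded component over all quadratic
`K`-algebras with `n` generators and `d` (linearly independent) quadratic relations. -/
noncomputable def hq (n d q : ℕ) : ℕ :=
  sInf { h | ∃ M : Submodule K ((Fin n → K) ⊗[K] (Fin n → K)),
      Module.finrank K M = d ∧ quadDim K (Fin n → K) q M = h }

end GS

namespace GS

variable (K : Type*) [Field K] (V : Type*) [AddCommGroup V] [Module K V]

/-- The canonical equivalence `(V ⊗ V) ⊗ (V ⊗ V) ≃ V^{⊗4}`. -/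
noncomputable def pow4 : ((V ⊗[K] V) ⊗[K] (V ⊗[K] V)) ≃ₗ[K] ⨂[K]^4 V :=
  (TensorProduct.congr (pow2 K V) (pow2 K V)).trans
    ((TensorPower.mulEquiv (n := 2) (m := 2)).trans (TensorPower.cast K V (by norm_num)))

/-- The subspace `L ⊗ N` of `V^{⊗4}` for subspaces `L, N ⊆ V ⊗ V`. -/
noncomputable def tsub4 (L N : Submodule K (V ⊗[K] V)) : Submodule K (⨂[K]^4 V) :=
  Submodule.map (pow4 K V : ((V ⊗[K] V) ⊗[K] (V ⊗[K] V)) →ₗ[K] ⨂[K]^4 V) (tsub K L N)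

/-- The subspace `V ⊗ M ⊗ V` of `V^{⊗4}` for a subspace `M ⊆ V ⊗ V`. -/
noncomputable def midSub4 (M : Submodule K (V ⊗[K] V)) : Submodule K (⨂[K]^4 V) :=
  Submodule.map (TensorPower.cast K V (by norm_num : 1 + (2 + 1) = 4)).toLinearMap (segAux K V 1 1 M)

end GS

/-!
Choose a surjection `p : E → K^r` and put `M = ker (p ⊗ p)`, of dimension `n² − r²`. The map
`id ⊗ p ⊗ p ⊗ id` kills `E ⊗ M ⊗ E`, while on `L ⊗ L` it is `(id ⊗ p)|_L ⊗ (p ⊗ id)|_L`, which is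
injective as soon as `L` meets neither `ker (id ⊗ p)` nor `ker (p ⊗ id)`. Both kernels have
dimension `n² − nr`, and the hypothesis says `d² ≤ n²r²`, i.e. `d ≤ nr`; so a `d`-dimensional `L`
avoiding both exists, because a vector space is never the union of two proper subspaces.
-/

open Module

section

variable {K V : Type*}

theorem Submodule.exists_notMem_notMem_of_ne_top [Ring K] [AddCommGroup V] [Module K V]
    {Y₁ Y₂ : Submodule K V} (h₁ : Y₁ ≠ ⊤) (h₂ : Y₂ ≠ ⊤) : ∃ v, v ∉ Y₁ ∧ v ∉ Y₂ := by
  obtain ⟨a, ha⟩ := SetLike.exists_not_mem_of_ne_top Y₁ h₁ rfl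
  obtain ⟨b, hb⟩ := SetLike.exists_not_mem_of_ne_top Y₂ h₂ rfl
  by_cases ha₂ : a ∈ Y₂
  · by_cases hb₁ : b ∈ Y₁
    · exact ⟨a + b, by rwa [Submodule.add_mem_iff_left _ hb₁],
        by rwa [Submodule.add_mem_iff_right _ ha₂]⟩
    · exact ⟨b, hb₁, hb⟩
  · exact ⟨a, ha, ha₂⟩

variable [DivisionRing K] [AddCommGroup V] [Module K V] [FiniteDimensional K V]

theorem Submodule.exists_finrank_eq_disjoint_disjoint (X₁ X₂ : Submodule K V) {d : ℕ}
    (h₁ : d + finrank K X₁ ≤ finrank K V) (h₂ : d + finrank K X₂ ≤ finrank K V) :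
    ∃ L : Submodule K V, finrank K L = d ∧ Disjoint L X₁ ∧ Disjoint L X₂ := by
  induction d with
  | zero => exact ⟨⊥, finrank_bot K V, disjoint_bot_left, disjoint_bot_left⟩
  | succ d ih =>
    obtain ⟨L, hL, hL₁, hL₂⟩ := ih (by omega) (by omega)
    have sup_ne_top {X : Submodule K V} (hLX : Disjoint L X)
        (hX : d + 1 + finrank K X ≤ finrank K V) : X ⊔ L ≠ ⊤ := by
      intro htop
      have := Submodule.finrank_sup_add_finrank_inf_eq X L
      rw [hLX.symm.eq_bot, htop, finrank_bot, finrank_top] at this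
      omega
    obtain ⟨v, hv₁, hv₂⟩ := Submodule.exists_notMem_notMem_of_ne_top
      (sup_ne_top hL₁ h₁) (sup_ne_top hL₂ h₂)
    have disjoint_sup {X : Submodule K V} (hLX : Disjoint L X) (hv : v ∉ X ⊔ L) :
        Disjoint (L ⊔ K ∙ v) X :=
      (hLX.symm.disjoint_sup_right_of_disjoint_sup_left
        ((Submodule.disjoint_span_singleton' (by rintro rfl; exact hv (zero_mem _))).2 hv)).symm
    refine ⟨L ⊔ K ∙ v, ?_, disjoint_sup hL₁ hv₁, disjoint_sup hL₂ hv₂⟩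
    rw [Submodule.finrank_sup_span_singleton fun hvL => hv₁ (Submodule.mem_sup_right hvL), hL]

end

theorem LinearMap.finrank_ker_add_finrank_of_surjective {K V W : Type*} [DivisionRing K]
    [AddCommGroup V] [Module K V] [AddCommGroup W] [Module K W] [FiniteDimensional K V]
    {f : V →ₗ[K] W} (hf : Function.Surjective f) :
    finrank K (LinearMap.ker f) + finrank K W = finrank K V := by
  rw [← f.finrank_range_add_finrank_ker, LinearMap.range_eq_top.2 hf, finrank_top, add_comm]

theorem exists_surjective_to_fin_of_le_finrank {K E : Type*} [Field K] [AddCommGroup E]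
    [Module K E] [FiniteDimensional K E] {r : ℕ} (hr : r ≤ finrank K E) :
    ∃ p : E →ₗ[K] (Fin r → K), Function.Surjective p :=
  ⟨LinearMap.funLeft K K (Fin.castLE hr) ∘ₗ (Module.finBasis K E).equivFun.toLinearMap,
    (LinearMap.funLeft_surjective_of_injective K K _ (Fin.castLE_injective hr)).comp
      (Module.finBasis K E).equivFun.surjective⟩

theorem Nat.sq_sub_sq_le_mul_of_sq_add_le {n r : ℕ} (hrn : r ≤ n)
    (hd : (n ^ 2 - r ^ 2) ^ 2 + n ^ 2 * (n ^ 2 - r ^ 2) ≤ n ^ 4) : n ^ 2 - r ^ 2 ≤ n * r := by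
  obtain ⟨d, hd_def⟩ : ∃ d, n ^ 2 = r ^ 2 + d := Nat.exists_eq_add_of_le (Nat.pow_le_pow_left hrn 2)
  rw [show n ^ 4 = (n ^ 2) ^ 2 by ring, hd_def, Nat.add_sub_cancel_left] at hd
  rw [hd_def, Nat.add_sub_cancel_left]
  have hsq : d ^ 2 ≤ (n * r) ^ 2 := by rw [mul_pow, hd_def]; nlinarith
  exact (Nat.pow_le_pow_iff_left two_ne_zero).1 hsq

namespace GS

variable {K : Type*} [Field K] {V : Type*} [AddCommGroup V] [Module K V]
  {M N P : Type*} [AddCommGroup M] [Module K M] [AddCommGroup N] [Module K N]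
  [AddCommGroup P] [Module K P]

theorem tmul_mem_tsub {A : Submodule K M} {B : Submodule K N} {a : M} {b : N} (ha : a ∈ A)
    (hb : b ∈ B) : a ⊗ₜ b ∈ tsub K A B :=
  ⟨⟨a, ha⟩ ⊗ₜ ⟨b, hb⟩, rfl⟩

theorem tsub_le_iff {A : Submodule K M} {B : Submodule K N} {S : Submodule K (M ⊗[K] N)} :
    tsub K A B ≤ S ↔ ∀ a ∈ A, ∀ b ∈ B, a ⊗ₜ b ∈ S := by
  refine ⟨fun h a ha b hb => h (tmul_mem_tsub ha hb), ?_⟩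
  rintro h _ ⟨t, rfl⟩
  induction t using TensorProduct.induction_on with
  | zero => simp
  | tmul a b => exact h a a.2 b b.2
  | add s t hs ht => rw [map_add]; exact S.add_mem hs ht

theorem pow1_apply (e : V) : pow1 K V e = PiTensorProduct.tprod K (fun _ : Fin 1 => e) := by
  rw [pow1, LinearEquiv.symm_apply_eq, PiTensorProduct.subsingletonEquiv_apply_tprod]

theorem _root_.TensorPower.mulEquiv_tprod_tmul_tprod {n m : ℕ} (a : Fin n → V) (b : Fin m → V) :
    TensorPower.mulEquiv (R := K) (PiTensorProduct.tprod K a ⊗ₜ PiTensorProduct.tprod K b) =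
      PiTensorProduct.tprod K (Fin.append a b) := by
  rw [← TensorPower.gMul_def, TensorPower.tprod_mul_tprod]

theorem pow2_tmul (x y : V) : pow2 K V (x ⊗ₜ y) = PiTensorProduct.tprod K ![x, y] := by
  simp only [pow2, LinearEquiv.trans_apply, TensorProduct.congr_tmul, pow1_apply,
    TensorPower.mulEquiv_tprod_tmul_tprod, TensorPower.cast_tprod]
  congr 1
  funext i
  fin_cases i <;> rfl

theorem pow4_tmul (a b c d : V) :
    pow4 K V ((a ⊗ₜ b) ⊗ₜ (c ⊗ₜ d)) = PiTensorProduct.tprod K ![a, b, c, d] := by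
  simp only [pow4, LinearEquiv.trans_apply, TensorProduct.congr_tmul, pow2_tmul,
    TensorPower.mulEquiv_tprod_tmul_tprod, TensorPower.cast_tprod]
  congr 1
  funext i
  fin_cases i <;> rfl

theorem cast_mulEquiv_pow1_tmul_pow2_tmul_pow1 (e₁ e₂ : V) (m : V ⊗[K] V) :
    TensorPower.cast K V (by norm_num : 1 + (2 + 1) = 4)
        (TensorPower.mulEquiv (pow1 K V e₁ ⊗ₜ TensorPower.mulEquiv (pow2 K V m ⊗ₜ pow1 K V e₂))) =
      pow4 K V ((tensorTensorTensorAssoc K V V V V).symm ((e₁ ⊗ₜ m) ⊗ₜ e₂)) := by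
  induction m using TensorProduct.induction_on with
  | zero => simp
  | tmul u v =>
    rw [tensorTensorTensorAssoc_symm_tmul, pow4_tmul]
    simp only [pow1_apply, pow2_tmul, TensorPower.mulEquiv_tprod_tmul_tprod,
      TensorPower.cast_tprod]
    congr 1
    funext i
    fin_cases i <;> rfl
  | add x y hx hy => simp only [TensorProduct.tmul_add, TensorProduct.add_tmul, map_add, hx, hy]

variable (K V) in
/-- The subspace `V ⊗ M ⊗ V` of `(V ⊗ V) ⊗ (V ⊗ V)`. -/
noncomputable def midSubTensor (M : Submodule K (V ⊗[K] V)) :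
    Submodule K ((V ⊗[K] V) ⊗[K] (V ⊗[K] V)) :=
  (tsub K (tsub K ⊤ M) ⊤).map (tensorTensorTensorAssoc K V V V V).symm.toLinearMap

theorem midSub4_le_map_midSubTensor (M : Submodule K (V ⊗[K] V)) :
    midSub4 K V M ≤ (midSubTensor K V M).map (pow4 K V).toLinearMap := by
  set S := (midSubTensor K V M).map (pow4 K V).toLinearMap
  rw [midSub4, segAux, Submodule.map_le_iff_le_comap, Submodule.map_le_iff_le_comap, tsub_le_iff]
  rintro a - _ ⟨z, hz, rfl⟩
  obtain ⟨e₁, rfl⟩ := (pow1 K V).surjective a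
  let f := (TensorPower.cast K V (by norm_num : 1 + (2 + 1) = 4)).toLinearMap ∘ₗ
    (TensorPower.mulEquiv (R := K) (M := V)).toLinearMap ∘ₗ TensorProduct.mk K _ _ (pow1 K V e₁) ∘ₗ
    (TensorPower.mulEquiv (R := K) (M := V)).toLinearMap
  suffices tsub K (M.map (pow2 K V : (V ⊗[K] V) →ₗ[K] ⨂[K]^2 V)) ⊤ ≤ S.comap f from this hz
  rw [tsub_le_iff]
  rintro _ ⟨m, hm, rfl⟩ c -
  obtain ⟨e₂, rfl⟩ := (pow1 K V).surjective c
  have : (e₁ ⊗ₜ m) ⊗ₜ e₂ ∈ tsub K (tsub K ⊤ M) ⊤ :=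
    tmul_mem_tsub (tmul_mem_tsub trivial hm) trivial
  change TensorPower.cast K V _ (TensorPower.mulEquiv
    (pow1 K V e₁ ⊗ₜ TensorPower.mulEquiv (pow2 K V m ⊗ₜ pow1 K V e₂))) ∈ S
  rw [cast_mulEquiv_pow1_tmul_pow2_tmul_pow1]
  exact Submodule.mem_map_of_mem (Submodule.mem_map_of_mem this)

theorem tsub_le_ker_rTensor {A : Submodule K M} (B : Submodule K N) {f : M →ₗ[K] P}
    (hA : A ≤ LinearMap.ker f) : tsub K A B ≤ LinearMap.ker (f.rTensor N) :=
  tsub_le_iff.2 fun a ha b _ => by simp [LinearMap.mem_ker.1 (hA ha)]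

theorem tsub_le_ker_lTensor (A : Submodule K M) {B : Submodule K N} {g : N →ₗ[K] P}
    (hB : B ≤ LinearMap.ker g) : tsub K A B ≤ LinearMap.ker (g.lTensor M) :=
  tsub_le_iff.2 fun a _ b hb => by simp [LinearMap.mem_ker.1 (hB hb)]

theorem map_lTensor_rTensor_comp_tensorTensorTensorAssoc_symm (p : V →ₗ[K] P) :
    TensorProduct.map (p.lTensor V) (p.rTensor V) ∘ₗ
        (tensorTensorTensorAssoc K V V V V).symm.toLinearMap =
      (tensorTensorTensorAssoc K V P P V).symm.toLinearMap ∘ₗ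
        ((TensorProduct.map p p).lTensor V).rTensor V := by
  ext; rfl

theorem disjoint_tsub_midSubTensor_ker_map (p : V →ₗ[K] P) {L : Submodule K (V ⊗[K] V)}
    (h₁ : Disjoint L (LinearMap.ker (p.lTensor V)))
    (h₂ : Disjoint L (LinearMap.ker (p.rTensor V))) :
    Disjoint (tsub K L L) (midSubTensor K V (LinearMap.ker (TensorProduct.map p p))) := by
  set Θ := TensorProduct.map (p.lTensor V) (p.rTensor V)
  have hvanish : midSubTensor K V (LinearMap.ker (TensorProduct.map p p)) ≤ LinearMap.ker Θ := by
    rintro _ ⟨y, hy, rfl⟩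
    have h := LinearMap.congr_fun (map_lTensor_rTensor_comp_tensorTensorTensorAssoc_symm p) y
    simp only [LinearMap.comp_apply, LinearEquiv.coe_coe] at h
    rw [LinearMap.mem_ker, LinearEquiv.coe_coe, h,
      tsub_le_ker_rTensor _ (tsub_le_ker_lTensor _ le_rfl) hy, map_zero]
  have hinj : Function.Injective (Θ ∘ₗ TensorProduct.map L.subtype L.subtype) := by
    rw [← TensorProduct.map_comp]
    exact TensorProduct.map_injective_of_flat_flat _ _
      (LinearMap.injective_domRestrict_iff.2 h₁) (LinearMap.injective_domRestrict_iff.2 h₂)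
  rw [Submodule.disjoint_def]
  rintro _ ⟨t, rfl⟩ hmid
  have ht : t = 0 := hinj (by simpa using hvanish hmid)
  rw [ht, map_zero]

theorem tsub4_inf_midSub4_ker_map_eq_bot (p : V →ₗ[K] P) {L : Submodule K (V ⊗[K] V)}
    (h₁ : Disjoint L (LinearMap.ker (p.lTensor V)))
    (h₂ : Disjoint L (LinearMap.ker (p.rTensor V))) :
    tsub4 K V L L ⊓ midSub4 K V (LinearMap.ker (TensorProduct.map p p)) = ⊥ := by
  refine eq_bot_iff.2 <| (inf_le_inf_left _ (midSub4_le_map_midSubTensor _)).trans ?_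
  rw [tsub4, ← Submodule.map_inf _ (pow4 K V).injective,
    (disjoint_tsub_midSubTensor_ker_map p h₁ h₂).eq_bot, Submodule.map_bot]

end GS

theorem exists_L_M_inter_eq_bot_general (K : Type*) [Field K] (E : Type*) [AddCommGroup E] [Module K E]
    (n r : ℕ) (hE : Module.finrank K E = n) (hrn : r < n)
    (hd : (n ^ 2 - r ^ 2) ^ 2 + n ^ 2 * (n ^ 2 - r ^ 2) ≤ n ^ 4) :
    ∃ L M : Submodule K (E ⊗[K] E),
      Module.finrank K L = n ^ 2 - r ^ 2 ∧ Module.finrank K M = n ^ 2 - r ^ 2 ∧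
      GS.tsub4 K E L L ⊓ GS.midSub4 K E M = ⊥ := by
  have : FiniteDimensional K E := Module.finite_of_finrank_pos (by omega)
  obtain ⟨p, hp⟩ : ∃ p : E →ₗ[K] (Fin r → K), Function.Surjective p :=
    exists_surjective_to_fin_of_le_finrank (by omega)
  have hd_le := Nat.sq_sub_sq_le_mul_of_sq_add_le hrn.le hd
  have h₁ := LinearMap.finrank_ker_add_finrank_of_surjective (LinearMap.lTensor_surjective E hp)
  have h₂ := LinearMap.finrank_ker_add_finrank_of_surjective (LinearMap.rTensor_surjective E hp)
  have hM := LinearMap.finrank_ker_add_finrank_of_surjective (TensorProduct.map_surjective hp hp)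
  have hEE : finrank K (E ⊗[K] E) = n ^ 2 := by rw [finrank_tensorProduct, hE, sq]
  simp only [finrank_tensorProduct, finrank_fin_fun, hE, ← sq, mul_comm r n] at h₁ h₂ hM
  obtain ⟨L, hL, hL₁, hL₂⟩ := Submodule.exists_finrank_eq_disjoint_disjoint
    (LinearMap.ker (p.lTensor E)) (LinearMap.ker (p.rTensor E)) (d := n ^ 2 - r ^ 2)
    (by omega) (by omega)
  exact ⟨L, LinearMap.ker (TensorProduct.map p p), hL, by omega,
    GS.tsub4_inf_midSub4_ker_map_eq_bot p hL₁ hL₂⟩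

/-- Let `E` be an `n`-dimensional `K`-vector space, `1 ≤ r < n`,
`d = n² − r²` and `d² + n²d ≤ n⁴`. Then there exist subspaces `L, M ⊆ E ⊗ E` with
`dim L = dim M = d` such that `(L ⊗ L) ∩ (E ⊗ M ⊗ E) = {0}` in `E^{⊗4}`. -/
theorem exists_L_M_inter_eq_bot (K : Type*) [Field K] (E : Type*) [AddCommGroup E] [Module K E]
    (n r : ℕ) (hE : Module.finrank K E = n) (hr1 : 1 ≤ r) (hrn : r < n)
    (hd : (n ^ 2 - r ^ 2) ^ 2 + n ^ 2 * (n ^ 2 - r ^ 2) ≤ n ^ 4) :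
    ∃ L M : Submodule K (E ⊗[K] E),
      Module.finrank K L = n ^ 2 - r ^ 2 ∧ Module.finrank K M = n ^ 2 - r ^ 2 ∧
      GS.tsub4 K E L L ⊓ GS.midSub4 K E M = ⊥ :=
  exists_L_M_inter_eq_bot_general K E n r hE hrn hd
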